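/- Let M be a positroid with Grassmann necklace (I_1,...,I_n), decorated permutation π, j a non-fixed point, and phi(a) as above for the contraction setting. For a ∈ (π⁻¹(j), j) (cyclic interval), we have j ∈ I_t for all t ∈ [π⁻¹(j)+1, j], and consequently phi(a) = phi(a+1) = j and μ(a) = π(a), where μ is the decorated permutation of M' = {H ∈ M : j ∈ H}. -/

import Mathlib

open Finset

/-- Position of `a` in the cyclic (linear) order starting at `t` on `Fin n`. -/
def cval {n : ℕ} (t a : Fin n) : ℕ := ((a - t : Fin n) : ℕ)

/-- Gale order on finsets of `Fin n` induced by the linear order with key `f`: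
compare the sorted lists of keys coordinatewise. -/
def galeLEKey {n : ℕ} (f : Fin n → ℕ) (A B : Finset (Fin n)) : Prop :=
  List.Forall₂ (· ≤ ·) ((A.image f).sort (· ≤ ·)) ((B.image f).sort (· ≤ ·))

/-- Gale order `≤_t` induced by the cyclic order starting at `t`. -/
def galeLE {n : ℕ} (t : Fin n) (A B : Finset (Fin n)) : Prop :=
  galeLEKey (cval t) A B

/-- The set of maximal elements of `D` w.r.t. `≤_a` (a singleton when `D` is nonempty). -/
def cmax {n : ℕ} (a : Fin n) (D : Finset (Fin n)) : Finset (Fin n) :=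
  D.filter (fun x => ∀ y ∈ D, cval a y ≤ cval a x)

/-- The set of minimal elements of `D` w.r.t. `≤_a` (a singleton when `D` is nonempty). -/
def cmin {n : ℕ} (a : Fin n) (D : Finset (Fin n)) : Finset (Fin n) :=
  D.filter (fun x => ∀ y ∈ D, cval a x ≤ cval a y)

/-- A Grassmann necklace on `[n]`. -/
def IsGrassmannNecklace {n : ℕ} [NeZero n] (I : Fin n → Finset (Fin n)) : Prop :=
  ∀ i : Fin n,
    (i ∈ I i → ∃ j : Fin n, I (i + 1) = insert j (I i \ {i})) ∧
    (i ∉ I i → I (i + 1) = I i)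

/-- A decorated permutation: a permutation with fixed points colored by `1` or `-1`
(non-fixed points carry the dummy color `1`). -/
structure DecoratedPerm (n : ℕ) where
  π : Equiv.Perm (Fin n)
  col : Fin n → ℤ
  col_fixed : ∀ i, π i = i → col i = 1 ∨ col i = -1
  col_nonfixed : ∀ i, π i ≠ i → col i = 1

/-- The Grassmann necklace associated to a decorated permutation:
`I_r = { i : i <_r π⁻¹(i), or π(i) = i and col(i) = -1 }`. -/
def necklaceOf {n : ℕ} (P : DecoratedPerm n) : Fin n → Finset (Fin n) :=
  fun r => Finset.univ.filter
    (fun i => cval r i < cval r (P.π.symm i) ∨ (P.π i = i ∧ P.col i = -1))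

/-- The forward map from Grassmann necklaces to decorated permutations:
`P` corresponds to the necklace `I`. -/
def Corresponds {n : ℕ} [NeZero n] (I : Fin n → Finset (Fin n)) (P : DecoratedPerm n) : Prop :=
  ∀ i : Fin n,
    ((I (i + 1) = I i ∧ i ∉ I i) → (P.π i = i ∧ P.col i = 1)) ∧
    ((I (i + 1) = I i ∧ i ∈ I i) → (P.π i = i ∧ P.col i = -1)) ∧
    (∀ j : Fin n, j ≠ i → i ∈ I i → I (i + 1) = insert j (I i \ {i}) → P.π i = j)

/-- `phiSet I j a` is `{j}` if `j ∈ I_a`, and otherwise `{max_a (I_a \ I_j)}`. -/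
def phiSet {n : ℕ} (I : Fin n → Finset (Fin n)) (j a : Fin n) : Finset (Fin n) :=
  if j ∈ I a then {j} else cmax a (I a \ I j)

/-- One pass of the contraction algorithm (fuel-indexed; the loop walks `a ← a+1`). -/
def contractLoop {n : ℕ} [NeZero n] (π : Equiv.Perm (Fin n)) (j : Fin n) :
    ℕ → (Fin n → Fin n) → (Fin n → ℤ) → Fin n → Fin n →
      (Fin n → Fin n) × (Fin n → ℤ)
  | 0, μ, c, q, a => (Function.update μ a q, c)
  | fuel + 1, μ, c, q, a =>
    if π a = j then (Function.update μ a q, c)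
    else if q = a ∨ (cval (a + 1) q < cval (a + 1) (π a) ∧
                      cval (a + 1) (π a) < cval (a + 1) j) then
      contractLoop π j fuel (Function.update μ a q)
        (if q = a then Function.update c a 1 else c) (π a) (a + 1)
    else
      contractLoop π j fuel μ c q (a + 1)

/-- The contraction algorithm: output `(μ, col')` from `(π, col)` and `j`. -/
def contractAlg {n : ℕ} [NeZero n] (π : Equiv.Perm (Fin n)) (col : Fin n → ℤ) (j : Fin n) :
    (Fin n → Fin n) × (Fin n → ℤ) :=
  contractLoop π j n (Function.update (⇑π) j j) (Function.update col j 1) (π j) (j + 1)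

/-- One pass of the restriction algorithm (the loop walks `a ← a-1`). -/
def restrictLoop {n : ℕ} [NeZero n] (π : Equiv.Perm (Fin n)) (j : Fin n) :
    ℕ → (Fin n → Fin n) → (Fin n → ℤ) → Fin n → Fin n →
      (Fin n → Fin n) × (Fin n → ℤ)
  | 0, μ, c, q, a => (Function.update μ a q, c)
  | fuel + 1, μ, c, q, a =>
    if π a = j then (Function.update μ a q, c)
    else if q = a ∨ (cval a j < cval a (π a) ∧ cval a (π a) < cval a q) then
      restrictLoop π j fuel (Function.update μ a q)
        (if q = a then Function.update c a 1 else c) (π a) (a - 1)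
    else
      restrictLoop π j fuel μ c q (a - 1)

/-- The restriction algorithm: output `(μ, col')` from `(π, col)` and `j`. -/
def restrictAlg {n : ℕ} [NeZero n] (π : Equiv.Perm (Fin n)) (col : Fin n → ℤ) (j : Fin n) :
    (Fin n → Fin n) × (Fin n → ℤ) :=
  restrictLoop π j n (Function.update (⇑π) j j) (Function.update col j 1) (π j) (j - 1)


/-!
For `t ∈ [π⁻¹(j)+1, j]` the arc `π⁻¹(j) → j` passes over `t`, so `j ∈ I_t`. Every `I_b` is a
basis of the positroid, i.e. `I_t ≤_t I_b` for all `t`: moving the base point from `t` to `b`, each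
step removes a moved point `y` and inserts `π y`, and since `π` permutes the moved points, the
insertions among the first `m` positions of the `≤_t` order never outnumber the removals. Hence
whenever `j ∈ I_b`, the `≤_b`-minimal basis `K_b` of `M'` is `I_b`. For `a ∈ (π⁻¹(j), j)` this
happens at `a` and `a + 1`, so `K` and `I` make the same step at `a` and `μ(a) = π(a)`.
-/

section CyclicOrder
open scoped Fin.NatCast
variable {n : ℕ}

lemma cval_lt (t a : Fin n) : cval t a < n := (a - t).isLt

variable [NeZero n]

lemma cval_injective (t : Fin n) : Function.Injective (cval t) :=
  fun _ _ h => sub_left_injective (Fin.val_injective h)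

@[simp]
lemma cval_self (t : Fin n) : cval t t = 0 := by simp [cval]

lemma cval_eq_zero_iff {t a : Fin n} : cval t a = 0 ↔ a = t := by
  rw [← cval_self t, (cval_injective t).eq_iff]

lemma cval_add_one_add_one (t a : Fin n) : cval (t + 1) (a + 1) = cval t a := by
  simp [cval]

lemma cval_eq_sub_of_le {s t x : Fin n} (h : cval s t ≤ cval s x) :
    cval t x = cval s x - cval s t := by
  have hsub : x - t = (x - s) - (t - s) := by abel
  rw [cval, hsub, Fin.sub_val_of_le h]
  rfl

lemma cval_eq_add_sub_of_lt {s t x : Fin n} (h : cval s x < cval s t) :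
    cval t x = n + cval s x - cval s t := by
  have hsub : x - t = (x - s) - (t - s) := by abel
  rw [cval, hsub, Fin.coe_sub_iff_lt.mpr h]
  rfl

lemma cval_self_add_one {t x : Fin n} (h : x ≠ t) : cval t (t + 1) = 1 := by
  have : 2 ≤ n := Fin.nontrivial_iff_two_le.mp ⟨x, t, h⟩
  rw [cval, add_sub_cancel_left, Fin.val_one', Nat.mod_eq_of_lt (by omega)]

lemma cval_add_one_left {t x : Fin n} (h : x ≠ t) : cval (t + 1) x + 1 = cval t x := by
  have h1 := cval_self_add_one h
  have h0 : cval t x ≠ 0 := fun h' => h (cval_eq_zero_iff.mp h')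
  rw [cval_eq_sub_of_le (s := t) (by omega)]
  omega

lemma cval_add_one_left_self {t x : Fin n} (h : x ≠ t) : cval (t + 1) t = n - 1 := by
  have h1 := cval_self_add_one h
  rw [cval_eq_add_sub_of_lt (s := t) (by simp [h1]), h1, cval_self]
  omega

lemma cval_add_one_left_lt_iff {r x y : Fin n} (hx : x ≠ r) (hy : y ≠ r) :
    cval (r + 1) x < cval (r + 1) y ↔ cval r x < cval r y := by
  have := cval_add_one_left hx
  have := cval_add_one_left hy
  omega

lemma cval_add_natCast {s : ℕ} (t : Fin n) (hs : s < n) : cval t (t + s) = s := by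
  rw [cval, add_sub_cancel_left, Fin.val_natCast, Nat.mod_eq_of_lt hs]

lemma add_cval (t b : Fin n) : t + (cval t b : Fin n) = b := by
  rw [cval, Fin.cast_val_eq_self, add_sub_cancel]

end CyclicOrder

section Necklace
variable {n : ℕ} (P : DecoratedPerm n)

@[simp]
lemma mem_necklaceOf {r x : Fin n} : x ∈ necklaceOf P r ↔
    cval r x < cval r (P.π.symm x) ∨ (P.π x = x ∧ P.col x = -1) := by
  simp [necklaceOf]

lemma mem_necklaceOf_of_fixed {r x : Fin n} (h : P.π x = x) :
    x ∈ necklaceOf P r ↔ P.col x = -1 := by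
  have hx : P.π.symm x = x := by rw [Equiv.symm_apply_eq, h]
  simp [hx, h]

variable {P} [NeZero n]

lemma self_mem_necklaceOf {r : Fin n} (h : P.π r ≠ r) : r ∈ necklaceOf P r := by
  have : P.π.symm r ≠ r := fun h' => h ((Equiv.symm_apply_eq _).1 h').symm
  simp [Nat.pos_of_ne_zero (mt cval_eq_zero_iff.mp this)]

lemma apply_notMem_necklaceOf {r : Fin n} (h : P.π r ≠ r) : P.π r ∉ necklaceOf P r := by
  simp [h]

lemma mem_necklaceOf_add_one_iff {r x : Fin n} (hxr : x ≠ r) (hx : x ≠ P.π r) :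
    x ∈ necklaceOf P (r + 1) ↔ x ∈ necklaceOf P r := by
  have hy : P.π.symm x ≠ r := fun h' => hx (by rw [← h', Equiv.apply_symm_apply])
  simp only [mem_necklaceOf, cval_add_one_left_lt_iff hxr hy]

lemma necklaceOf_add_one_of_fixed {r : Fin n} (h : P.π r = r) :
    necklaceOf P (r + 1) = necklaceOf P r := by
  ext x
  by_cases hx : P.π x = x
  · rw [mem_necklaceOf_of_fixed P hx, mem_necklaceOf_of_fixed P hx]
  · exact mem_necklaceOf_add_one_iff (by rintro rfl; exact hx h)
      (by rintro rfl; exact hx (by rw [h, h]))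

lemma necklaceOf_add_one_of_moved {r : Fin n} (h : P.π r ≠ r) :
    necklaceOf P (r + 1) = insert (P.π r) (necklaceOf P r \ {r}) := by
  have hlast := cval_add_one_left_self h
  ext x
  rw [mem_insert, mem_sdiff, mem_singleton]
  by_cases hxr : x = r
  · subst hxr
    have hlt := cval_lt (x + 1) (P.π.symm x)
    simp [Ne.symm h, hlast, h]
    omega
  by_cases hx : x = P.π r
  · subst hx
    have hne : cval (r + 1) (P.π r) ≠ n - 1 := fun h' =>
      h ((cval_injective (r + 1)) (h'.trans hlast.symm))
    have hlt := cval_lt (r + 1) (P.π r)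
    simp [hlast]
    omega
  · simp [mem_necklaceOf_add_one_iff hxr hx, hx, hxr]

end Necklace

section Counting
open scoped Fin.NatCast
variable {n : ℕ} {P : DecoratedPerm n}

lemma card_filter_moved_apply_le (t : Fin n) (s m : ℕ) :
    #{y | P.π y ≠ y ∧ cval t y < s ∧ cval t (P.π y) ≤ m} ≤
      #{y | P.π y ≠ y ∧ cval t y < s ∧ cval t y ≤ m} := by
  by_cases hsm : s ≤ m + 1
  · refine card_le_card fun y => ?_
    simp only [mem_filter, mem_univ, true_and]
    rintro ⟨hy, hlt, -⟩
    exact ⟨hy, hlt, by omega⟩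
  calc #{y | P.π y ≠ y ∧ cval t y < s ∧ cval t (P.π y) ≤ m}
      ≤ #{y | P.π y ≠ y ∧ cval t (P.π y) ≤ m} :=
        card_le_card fun y => by simp only [mem_filter]; tauto
    _ = #{y | P.π y ≠ y ∧ cval t y ≤ m} := card_equiv P.π fun y => by simp
    _ = #{y | P.π y ≠ y ∧ cval t y < s ∧ cval t y ≤ m} := by
        congr 1; ext y; simp only [mem_filter, mem_univ, true_and]
        exact ⟨fun ⟨hy, hle⟩ => ⟨hy, by omega, hle⟩, fun ⟨hy, _, hle⟩ => ⟨hy, hle⟩⟩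

variable [NeZero n]

lemma sum_necklaceOf_add_one (w : Fin n → ℕ) {r : Fin n} (h : P.π r ≠ r) :
    ∑ x ∈ necklaceOf P (r + 1), w x + w r = ∑ x ∈ necklaceOf P r, w x + w (P.π r) := by
  have hr : r ∉ necklaceOf P (r + 1) := by
    simp [necklaceOf_add_one_of_moved h, Ne.symm h]
  have hinsert : insert r (necklaceOf P (r + 1)) = insert (P.π r) (necklaceOf P r) := by
    rw [necklaceOf_add_one_of_moved h, sdiff_singleton_eq_erase, Finset.insert_comm,
      insert_erase (self_mem_necklaceOf h)]
  have := congrArg (∑ x ∈ ·, w x) hinsert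
  simp only [sum_insert hr, sum_insert (apply_notMem_necklaceOf h)] at this
  omega

lemma sum_necklaceOf_add_natCast (w : Fin n → ℕ) (t : Fin n) {s : ℕ} (hs : s < n) :
    ∑ x ∈ necklaceOf P (t + s), w x + ∑ y with P.π y ≠ y ∧ cval t y < s, w y =
      ∑ x ∈ necklaceOf P t, w x + ∑ y with P.π y ≠ y ∧ cval t y < s, w (P.π y) := by
  induction s with
  | zero => simp
  | succ s ih =>
    set r := t + (s : Fin n)
    have hcr : cval t r = s := cval_add_natCast t (by omega)
    have hcy : ∀ y, cval t y < s + 1 ↔ cval t y < s ∨ y = r := fun y => by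
      rw [← (cval_injective t).eq_iff, hcr]; omega
    have hr : r ∉ univ.filter fun y => P.π y ≠ y ∧ cval t y < s := by simp [hcr]
    have := ih (by omega)
    rw [show t + ((s + 1 : ℕ) : Fin n) = r + 1 by rw [Nat.cast_succ, add_assoc]]
    by_cases hmov : P.π r = r
    · have hfilter : (univ.filter fun y => P.π y ≠ y ∧ cval t y < s + 1) =
          univ.filter fun y => P.π y ≠ y ∧ cval t y < s := by
        ext y
        simp only [mem_filter, mem_univ, true_and, hcy]
        constructor
        · rintro ⟨hy, hlt | rfl⟩
          exacts [⟨hy, hlt⟩, absurd hmov hy]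
        · rintro ⟨hy, hlt⟩; exact ⟨hy, Or.inl hlt⟩
      rwa [hfilter, necklaceOf_add_one_of_fixed hmov]
    · have hfilter : (univ.filter fun y => P.π y ≠ y ∧ cval t y < s + 1) =
          insert r (univ.filter fun y => P.π y ≠ y ∧ cval t y < s) := by
        ext y
        simp only [mem_filter, mem_univ, true_and, mem_insert, hcy]
        constructor
        · rintro ⟨hy, hlt | rfl⟩
          exacts [Or.inr ⟨hy, hlt⟩, Or.inl rfl]
        · rintro (rfl | ⟨hy, hlt⟩)
          exacts [⟨hmov, Or.inr rfl⟩, ⟨hy, Or.inl hlt⟩]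
      have hstep := sum_necklaceOf_add_one w hmov
      rw [hfilter, sum_insert hr, sum_insert hr]
      omega

lemma card_filter_necklaceOf_le (t b : Fin n) (m : ℕ) :
    #{x ∈ necklaceOf P b | cval t x ≤ m} ≤ #{x ∈ necklaceOf P t | cval t x ≤ m} := by
  have hwalk := sum_necklaceOf_add_natCast (P := P) (fun x => if cval t x ≤ m then 1 else 0) t
    (cval_lt t b)
  simp only [add_cval, ← card_filter, filter_filter, and_assoc] at hwalk
  have := card_filter_moved_apply_le (P := P) t (cval t b) m
  omega

end Counting

section GaleOrder
variable {α : Type*}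

lemma List.forall₂_le_antisymm [PartialOrder α] {l₁ l₂ : List α}
    (h₁ : List.Forall₂ (· ≤ ·) l₁ l₂) (h₂ : List.Forall₂ (· ≤ ·) l₂ l₁) : l₁ = l₂ := by
  induction h₁ with
  | nil => rfl
  | cons hab _ ih =>
    cases h₂ with
    | cons hba h₂ => rw [le_antisymm hab hba, ih h₂]

variable [LinearOrder α]

lemma Finset.orderEmbOfFin_le_iff (s : Finset α) {k : ℕ} (h : #s = k) (i : Fin k) (b : α) :
    s.orderEmbOfFin h i ≤ b ↔ (i : ℕ) < #{x ∈ s | x ≤ b} := by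
  set e := s.orderEmbOfFin h
  have hcard : #{x ∈ s | x ≤ b} = #{j | e j ≤ b} := by
    calc #{x ∈ s | x ≤ b} = #{x ∈ univ.map e.toEmbedding | x ≤ b} := by
          rw [map_orderEmbOfFin_univ]
      _ = #{j | e j ≤ b} := by rw [filter_map, card_map]; rfl
  rw [hcard]
  set J := univ.filter fun j => e j ≤ b
  constructor
  · intro hle
    have hsub : Iic i ⊆ J := fun j hj =>
      mem_filter.2 ⟨mem_univ _, (e.monotone (mem_Iic.1 hj)).trans hle⟩
    have := card_le_card hsub
    rw [Fin.card_Iic] at this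
    omega
  · contrapose!
    intro hlt
    have hsub : J ⊆ Iio i := fun j hj =>
      mem_Iio.2 (e.lt_iff_lt.1 (((mem_filter.1 hj).2).trans_lt hlt))
    simpa using card_le_card hsub

lemma Finset.forall₂_sort_le_of_card_filter_le {S T : Finset α} (hcard : #S = #T)
    (h : ∀ b, #{x ∈ T | x ≤ b} ≤ #{x ∈ S | x ≤ b}) :
    List.Forall₂ (· ≤ ·) (S.sort (· ≤ ·)) (T.sort (· ≤ ·)) := by
  rw [List.forall₂_iff_get]
  refine ⟨by simp [hcard], fun i h₁ h₂ => ?_⟩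
  have hS := orderEmbOfFin_apply S rfl ⟨i, by simpa using h₁⟩
  set iT : Fin #T := ⟨i, by simpa using h₂⟩
  have hT := orderEmbOfFin_apply T rfl iT
  simp only [Fin.getElem_fin] at hS hT
  rw [List.get_eq_getElem, List.get_eq_getElem, ← hS, ← hT, orderEmbOfFin_le_iff]
  exact ((orderEmbOfFin_le_iff T rfl iT _).1 le_rfl).trans_le (h _)

end GaleOrder

section NecklaceGale
variable {n : ℕ} [NeZero n]

lemma galeLE_antisymm {t : Fin n} {A B : Finset (Fin n)} (h₁ : galeLE t A B)
    (h₂ : galeLE t B A) : A = B := by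
  have himage : A.image (cval t) = B.image (cval t) := by
    simpa only [sort_toFinset] using congrArg List.toFinset (List.forall₂_le_antisymm h₁ h₂)
  exact image_injective (cval_injective t) himage

variable (P : DecoratedPerm n)

lemma card_necklaceOf (t b : Fin n) : #(necklaceOf P t) = #(necklaceOf P b) := by
  have hall : ∀ r s, #{x ∈ necklaceOf P r | cval s x ≤ n - 1} = #(necklaceOf P r) :=
    fun r s => by
      rw [filter_true_of_mem fun x _ => Nat.le_sub_one_of_lt (cval_lt s x)]
  have h₁ := card_filter_necklaceOf_le (P := P) t b (n - 1)
  have h₂ := card_filter_necklaceOf_le (P := P) b t (n - 1)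
  rw [hall, hall] at h₁ h₂
  omega

lemma galeLE_necklaceOf (t b : Fin n) : galeLE t (necklaceOf P t) (necklaceOf P b) := by
  have hinj := cval_injective t
  apply forall₂_sort_le_of_card_filter_le
  · rw [card_image_of_injective _ hinj, card_image_of_injective _ hinj, card_necklaceOf]
  · intro m
    rw [filter_image, filter_image, card_image_of_injective _ hinj,
      card_image_of_injective _ hinj]
    exact card_filter_necklaceOf_le t b m

end NecklaceGale

section Contraction
variable {n : ℕ} [NeZero n] {P : DecoratedPerm n}

lemma eq_necklaceOf_of_isMin {j b : Fin n} {K : Finset (Fin n)}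
    (hmin : ∀ H : Finset (Fin n),
      (j ∈ H ∧ ∀ t : Fin n, galeLE t (necklaceOf P t) H) → galeLE b K H)
    (hK : galeLE b (necklaceOf P b) K) (hj : j ∈ necklaceOf P b) : K = necklaceOf P b :=
  galeLE_antisymm (hmin _ ⟨hj, fun t => galeLE_necklaceOf P t b⟩) hK

lemma Corresponds.apply_eq_of_eq_necklaceOf {K : Fin n → Finset (Fin n)} {Q : DecoratedPerm n}
    (hQ : Corresponds K Q) {a : Fin n} (h₀ : K a = necklaceOf P a)
    (h₁ : K (a + 1) = necklaceOf P (a + 1)) : Q.π a = P.π a := by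
  by_cases hmov : P.π a = a
  · have hstep : K (a + 1) = K a := by rw [h₀, h₁, necklaceOf_add_one_of_fixed hmov]
    rw [hmov]
    by_cases ha : a ∈ K a
    exacts [((hQ a).2.1 ⟨hstep, ha⟩).1, ((hQ a).1 ⟨hstep, ha⟩).1]
  · refine (hQ a).2.2 (P.π a) hmov (h₀ ▸ self_mem_necklaceOf hmov) ?_
    rw [h₀, h₁, necklaceOf_add_one_of_moved hmov]

lemma mem_necklaceOf_of_cval_le {j t : Fin n} (hj : P.π.symm j ≠ j)
    (ht : cval (P.π.symm j + 1) t ≤ cval (P.π.symm j + 1) j) : j ∈ necklaceOf P t := by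
  have hlast := cval_add_one_left_self hj.symm
  have hjp : cval (P.π.symm j + 1) j ≠ n - 1 :=
    fun h => hj ((cval_injective _) (h.trans hlast.symm)).symm
  have := cval_lt (P.π.symm j + 1) j
  rw [mem_necklaceOf]
  left
  rw [cval_eq_sub_of_le ht, cval_eq_sub_of_le (ht.trans (by omega)), hlast]
  omega

end Contraction

/-- for `a` in the cyclic interval `(π⁻¹(j), j)`, we have `j ∈ I_t`
for all `t ∈ [π⁻¹(j)+1, j]`, and `phi(a) = phi(a+1) = j` and `μ(a) = π(a)`,
where `μ` is the decorated permutation of `M' = {H ∈ M : j ∈ H}`. -/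
theorem contraction_case_two (n : ℕ) [NeZero n] (P : DecoratedPerm n) (j : Fin n)
    (hj : P.π j ≠ j) (K : Fin n → Finset (Fin n)) (Q : DecoratedPerm n)
    -- `K_b` is the `≤_b`-minimal basis of `M'`:
    (hK : ∀ b : Fin n,
      (j ∈ K b ∧ ∀ t : Fin n, galeLE t (necklaceOf P t) (K b)) ∧
      ∀ H : Finset (Fin n),
        (j ∈ H ∧ ∀ t : Fin n, galeLE t (necklaceOf P t) H) → galeLE b (K b) H)
    -- `Q = (μ, col')` is the decorated permutation of the necklace `K`:
    (hQ : Corresponds K Q) :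
    (∀ t : Fin n, cval (P.π.symm j + 1) t ≤ cval (P.π.symm j + 1) j →
        j ∈ necklaceOf P t) ∧
    (∀ a : Fin n, a ≠ P.π.symm j → cval (P.π.symm j) a < cval (P.π.symm j) j →
        phiSet (necklaceOf P) j a = {j} ∧
        phiSet (necklaceOf P) j (a + 1) = {j} ∧
        Q.π a = P.π a) := by
  have hpj : P.π.symm j ≠ j := fun h => hj ((Equiv.symm_apply_eq _).1 h).symm
  have hmem := fun t => mem_necklaceOf_of_cval_le (t := t) hpj
  refine ⟨hmem, fun a hap ha => ?_⟩
  have hcj := cval_add_one_left (Ne.symm hpj)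
  have hca := cval_add_one_left hap
  have hja : j ∈ necklaceOf P a := hmem a (by omega)
  have hja' : j ∈ necklaceOf P (a + 1) := hmem (a + 1) (by rw [cval_add_one_add_one]; omega)
  have hKeq : ∀ b, j ∈ necklaceOf P b → K b = necklaceOf P b :=
    fun b hb => eq_necklaceOf_of_isMin (hK b).2 ((hK b).1.2 b) hb
  exact ⟨if_pos hja, if_pos hja', hQ.apply_eq_of_eq_necklaceOf (hKeq a hja) (hKeq _ hja')⟩
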